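/- arXiv:2412.14059 — 4 statements merged into one kernel-verified Lean document; each statement's English description precedes it below -/
import Mathlib

section
/- As z → 1⁻, the quantity ζ(z)^{3/2} defined by (2/3)ζ(z)^{3/2} = ln((1+√(1-z²))/z) - √(1-z²) satisfies ζ(z)^{3/2} = √2·(1-z)^{3/2} + (9√2/20)·(1-z)^{5/2} + O((1-z)^{7/2}). -/
/-!
With `w = 1 - t`, the integrand is `√(1 - t²) / t = √w · √(2 - w) / (1 - w) = √2 · √w · (1 + 3w/4 + O(w²))`,
and `3/2` times its integral over `[z, 1]` is `√2 w^{3/2} + (9√2/20) w^{5/2} + O(w^{7/2})`.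
To make this rigorous, note that the remainder `ζ^{3/2} - √2 w^{3/2} - (9√2/20) w^{5/2}` vanishes at
`t = 1` and that its derivative is `√w · 3/(2t)` times `(√2 + 3√2/4 · w)(1 - w) - √(2 - w) = O(w²)`,
so the mean value theorem bounds it by `9 w^{5/2} · w`.
-/

open Real Set

noncomputable def zetaRemainder (x : ℝ) : ℝ :=
  3 / 2 * (log ((1 + √(1 - x ^ 2)) / x) - √(1 - x ^ 2))
    - √2 * (1 - x) ^ ((3 : ℝ) / 2) - 9 * √2 / 20 * (1 - x) ^ ((5 : ℝ) / 2)

noncomputable def zetaRemainderDeriv (t : ℝ) : ℝ :=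
  3 / (2 * t) * √(1 - t) * ((√2 + 3 * √2 / 4 * (1 - t)) * t - √(1 + t))

lemma rpow_natCast_add_half {x : ℝ} (hx : 0 ≤ x) (n : ℕ) : x ^ ((n : ℝ) + 1 / 2) = x ^ n * √x := by
  rw [rpow_add' hx (by positivity), rpow_natCast, sqrt_eq_rpow]

lemma continuousOn_zetaRemainder : ContinuousOn zetaRemainder (Ioi 0) := by
  have hpos : ∀ x ∈ Ioi (0 : ℝ), (1 + √(1 - x ^ 2)) / x ≠ 0 := fun x hx =>
    (div_pos (by positivity) hx).ne'
  unfold zetaRemainder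
  fun_prop (disch := first | exact hpos | exact fun x hx => (mem_Ioi.1 hx).ne' | norm_num)

lemma zetaRemainder_one : zetaRemainder 1 = 0 := by
  norm_num [zetaRemainder]

lemma hasDerivAt_log_div_sub_sqrt {t : ℝ} (ht0 : 0 < t) (ht1 : t < 1) :
    HasDerivAt (fun x => log ((1 + √(1 - x ^ 2)) / x) - √(1 - x ^ 2)) (-√(1 - t ^ 2) / t) t := by
  have hs : 0 < 1 - t ^ 2 := by nlinarith
  have hsqrt : HasDerivAt (fun x => √(1 - x ^ 2)) (-(2 * t) / (2 * √(1 - t ^ 2))) t := by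
    simpa using ((hasDerivAt_pow 2 t).const_sub 1).sqrt hs.ne'
  have hlog := ((hsqrt.const_add 1).div (hasDerivAt_id t) ht0.ne').log
    (div_pos (by positivity) ht0).ne'
  refine (hlog.sub hsqrt).congr_deriv ?_
  have hsq := sq_sqrt hs.le
  have hsqrt_pos := sqrt_pos.2 hs
  simp only [id, Pi.div_apply]
  field_simp
  linear_combination √(1 - t ^ 2) * hsq

lemma hasDerivAt_zetaRemainder {t : ℝ} (ht0 : 0 < t) (ht1 : t < 1) :
    HasDerivAt zetaRemainder (zetaRemainderDeriv t) t := by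
  have hw : 0 < 1 - t := by linarith
  have hone : HasDerivAt (fun x : ℝ => 1 - x) (-1) t := by
    simpa using (hasDerivAt_id t).const_sub 1
  have h3 := (hone.rpow_const (p := 3 / 2) (Or.inl hw.ne')).const_mul √2
  have h5 := (hone.rpow_const (p := 5 / 2) (Or.inl hw.ne')).const_mul (9 * √2 / 20)
  refine ((((hasDerivAt_log_div_sub_sqrt ht0 ht1).const_mul (3 / 2)).sub h3).sub h5).congr_deriv ?_
  rw [show (3 : ℝ) / 2 - 1 = (0 : ℕ) + 1 / 2 by norm_num, show (5 : ℝ) / 2 - 1 = (1 : ℕ) + 1 / 2 by norm_num,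
    rpow_natCast_add_half hw.le, rpow_natCast_add_half hw.le,
    show 1 - t ^ 2 = (1 - t) * (1 + t) by ring, sqrt_mul hw.le, zetaRemainderDeriv]
  field_simp
  ring

lemma abs_sqrt_two_mul_sub_sqrt_le {w : ℝ} (hw0 : 0 ≤ w) (hw : w ≤ 1 / 2) :
    |(√2 + 3 * √2 / 4 * w) * (1 - w) - √(2 - w)| ≤ 3 * w ^ 2 := by
  set s := √(2 - w)
  set A := (√2 + 3 * √2 / 4 * w) * (1 - w)
  have hs1 : 1 ≤ s := one_le_sqrt.2 (by linarith)
  have hs2 : s ^ 2 = 2 - w := sq_sqrt (by linarith)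
  have hA0 : 0 ≤ A := mul_nonneg (by positivity) (by linarith)
  have hgap : s ^ 2 - A ^ 2 = w ^ 2 * (23 / 8 - 3 / 4 * w - 9 / 8 * w ^ 2) := by
    linear_combination hs2 - (1 + 3 / 4 * w) ^ 2 * (1 - w) ^ 2 * sq_sqrt (zero_le_two : (0 : ℝ) ≤ 2)
  have hAs : A ≤ s := by
    refine le_sqrt_of_sq_le ?_
    nlinarith [mul_nonneg (sq_nonneg w) (by nlinarith : (0 : ℝ) ≤ 23 / 8 - 3 / 4 * w - 9 / 8 * w ^ 2)]
  have hsA : s - A ≤ 3 * w ^ 2 := calc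
    s - A ≤ (s - A) * (s + A) := le_mul_of_one_le_right (by linarith) (by linarith)
    _ = s ^ 2 - A ^ 2 := by ring
    _ ≤ 3 * w ^ 2 := by rw [hgap]; nlinarith
  rw [abs_sub_comm, abs_of_nonneg (by linarith)]
  exact hsA

lemma abs_zetaRemainderDeriv_le {t : ℝ} (ht0 : 1 / 2 ≤ t) (ht1 : t ≤ 1) :
    |zetaRemainderDeriv t| ≤ 9 * (1 - t) ^ ((5 : ℝ) / 2) := by
  have hw : 0 ≤ 1 - t := by linarith
  have hbracket := abs_sqrt_two_mul_sub_sqrt_le hw (by linarith)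
  rw [show 1 - (1 - t) = t by ring, show 2 - (1 - t) = 1 + t by ring] at hbracket
  have hcoef : |3 / (2 * t)| ≤ 3 := by
    rw [abs_of_pos (by positivity), div_le_iff₀ (by positivity)]
    linarith
  rw [show (5 : ℝ) / 2 = (2 : ℕ) + 1 / 2 by norm_num, rpow_natCast_add_half hw, zetaRemainderDeriv,
    abs_mul, abs_mul, abs_of_nonneg (sqrt_nonneg _)]
  calc |3 / (2 * t)| * √(1 - t) * |(√2 + 3 * √2 / 4 * (1 - t)) * t - √(1 + t)|
      ≤ 3 * √(1 - t) * (3 * (1 - t) ^ 2) := by gcongr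
    _ = 9 * ((1 - t) ^ 2 * √(1 - t)) := by ring

theorem zeta_expansion_below_general (ζ : ℝ → ℝ)
    (hdef : ∀ z ∈ Set.Ioo (0:ℝ) 1,
      (2/3) * (ζ z) ^ ((3:ℝ)/2)
        = Real.log ((1 + Real.sqrt (1 - z^2)) / z) - Real.sqrt (1 - z^2)) :
    ∃ C > 0, ∃ δ > 0, δ < 1 ∧ ∀ z, 1 - δ < z → z < 1 →
      |(ζ z) ^ ((3:ℝ)/2) - Real.sqrt 2 * (1 - z) ^ ((3:ℝ)/2)
        - (9 * Real.sqrt 2 / 20) * (1 - z) ^ ((5:ℝ)/2)| ≤ C * (1 - z) ^ ((7:ℝ)/2) := by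
  refine ⟨9, by norm_num, 1 / 2, by norm_num, by norm_num, fun z hz hz1 => ?_⟩
  have hw : 0 < 1 - z := by linarith
  have hremainder : (ζ z) ^ ((3:ℝ)/2) - √2 * (1 - z) ^ ((3:ℝ)/2)
      - (9 * √2 / 20) * (1 - z) ^ ((5:ℝ)/2) = zetaRemainder z := by
    rw [zetaRemainder, ← hdef z ⟨by linarith, hz1⟩]
    ring
  have hderiv_le : ∀ x ∈ Ico z 1, ‖zetaRemainderDeriv x‖ ≤ 9 * (1 - z) ^ ((5 : ℝ) / 2) :=
    fun x hx => (abs_zetaRemainderDeriv_le (by linarith [hx.1]) hx.2.le).trans <| by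
      gcongr
      · linarith [hx.2]
      · exact hx.1
  have hmvt := norm_image_sub_le_of_norm_deriv_right_le_segment
    (continuousOn_zetaRemainder.mono fun x hx => show 0 < x by linarith [hx.1])
    (fun x hx => (hasDerivAt_zetaRemainder (by linarith [hx.1]) hx.2).hasDerivWithinAt)
    hderiv_le 1 ⟨hz1.le, le_rfl⟩
  rw [zetaRemainder_one, zero_sub, norm_neg, Real.norm_eq_abs] at hmvt
  rw [hremainder, show (7 : ℝ) / 2 = 5 / 2 + 1 by norm_num, rpow_add hw, rpow_one, ← mul_assoc]
  exact hmvt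

theorem zeta_expansion_below (ζ : ℝ → ℝ)
    (hpos : ∀ z ∈ Set.Ioo (0:ℝ) 1, 0 < ζ z)
    (hdef : ∀ z ∈ Set.Ioo (0:ℝ) 1,
      (2/3) * (ζ z) ^ ((3:ℝ)/2)
        = Real.log ((1 + Real.sqrt (1 - z^2)) / z) - Real.sqrt (1 - z^2)) :
    ∃ C > 0, ∃ δ > 0, δ < 1 ∧ ∀ z, 1 - δ < z → z < 1 →
      |(ζ z) ^ ((3:ℝ)/2) - Real.sqrt 2 * (1 - z) ^ ((3:ℝ)/2)
        - (9 * Real.sqrt 2 / 20) * (1 - z) ^ ((5:ℝ)/2)| ≤ C * (1 - z) ^ ((7:ℝ)/2) :=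
  zeta_expansion_below_general ζ hdef
end

section
/- For z > 1, the quantity (-ζ(z))^{3/2} defined by (2/3)(-ζ(z))^{3/2} = √(z²-1) - arccos(1/z) satisfies, as z → 1⁺, the expansion (-ζ(z))^{3/2} = √2·(z-1)^{3/2} - (9√2/20)·(z-1)^{5/2} + O((z-1)^{7/2}). -/
/-!
Substitute `z = 1 + t²`. Then `arccos (1/z) = arctan (t √(2 + t²))`, so `(-ζ)^{3/2}` is
`3/2 (u - arctan u)` with `u = t √(2 + t²)`, a smooth function of `t` with derivative
`3 t² √(2 + t²) / (1 + t²)`. This agrees with the derivative of `√2 t³ - 9√2/20 t⁵` up to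
`6 t⁶`, and integrating from `0` bounds the remainder by `t⁷ = (z - 1)^{7/2}`.
-/

open Real Set

theorem arccos_inv_eq_arctan {t : ℝ} (ht : 0 ≤ t) :
    arccos (1 + t ^ 2)⁻¹ = arctan (t * √(2 + t ^ 2)) := by
  have h : √(1 + (t * √(2 + t ^ 2)) ^ 2) = 1 + t ^ 2 := by
    rw [mul_pow, sq_sqrt (by positivity), sqrt_eq_iff_mul_self_eq (by positivity) (by positivity)]
    ring
  rw [arctan_eq_arccos (by positivity), h]

noncomputable def airyPhase (t : ℝ) : ℝ :=
  t * √(2 + t ^ 2) - arctan (t * √(2 + t ^ 2))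

theorem sqrt_sq_sub_one_sub_arccos_eq_airyPhase {z : ℝ} (hz : 1 ≤ z) :
    √(z ^ 2 - 1) - arccos (1 / z) = airyPhase √(z - 1) := by
  have ht : √(z - 1) ^ 2 = z - 1 := sq_sqrt (by linarith)
  have hz' : z = 1 + √(z - 1) ^ 2 := by rw [ht]; ring
  have hroot : √(z ^ 2 - 1) = √(z - 1) * √(2 + √(z - 1) ^ 2) := by
    rw [← sqrt_mul (by linarith), ht]; congr 1; ring
  rw [airyPhase, ← arccos_inv_eq_arctan (sqrt_nonneg _), ← hz', one_div, hroot]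

theorem hasDerivAt_airyPhase (t : ℝ) :
    HasDerivAt airyPhase (2 * t ^ 2 * √(2 + t ^ 2) / (1 + t ^ 2)) t := by
  have hr2 : √(2 + t ^ 2) ^ 2 = 2 + t ^ 2 := sq_sqrt (by positivity)
  have hroot : HasDerivAt (fun t => √(2 + t ^ 2)) (t / √(2 + t ^ 2)) t := by
    convert ((hasDerivAt_pow 2 t).const_add 2).sqrt (by positivity) using 1
    field_simp; norm_num; ring
  have hu : HasDerivAt (fun t => t * √(2 + t ^ 2)) (2 * (1 + t ^ 2) / √(2 + t ^ 2)) t := by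
    refine ((hasDerivAt_id' t).mul hroot).congr_deriv ?_
    field_simp; linear_combination hr2
  refine (hu.sub hu.arctan).congr_deriv ?_
  rw [mul_pow, hr2]
  field_simp
  linear_combination -t ^ 2 * (1 + t ^ 2) ^ 2 * hr2

theorem abs_sqrt_two_add_div_one_add_sub_le {s : ℝ} (hs0 : 0 ≤ s) (hs : s ≤ 1 / 3) :
    |√(2 + s) / (1 + s) - √2 * (1 - 3 * s / 4)| ≤ 2 * s ^ 2 := by
  have hA : √(2 + s) ^ 2 = 2 + s := sq_sqrt (by linarith)
  have hB : √2 ^ 2 = 2 := sq_sqrt (by norm_num)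
  have hA1 : 1 ≤ √(2 + s) := one_le_sqrt.mpr (by linarith)
  have hB1 : 1 ≤ √2 := one_le_sqrt.mpr (by norm_num)
  -- `√2 * p = √2 * (1 - 3 * s / 4) * (1 + s)` agrees with `√(2 + s)` to second order in `s`
  generalize hp : 1 + s / 4 - 3 * s ^ 2 / 4 = p
  have hp1 : 1 ≤ p := by nlinarith
  have hnum : |√(2 + s) - √2 * p| ≤ 2 * s ^ 2 := by
    have hdiff : (√(2 + s) - √2 * p) * (√(2 + s) + √2 * p)
        = s ^ 2 * (23 / 8 + 3 * s / 4 - 9 * s ^ 2 / 8) := by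
      rw [← hp]; linear_combination hA - (1 + s / 4 - 3 * s ^ 2 / 4) ^ 2 * hB
    have hsum : 2 ≤ √(2 + s) + √2 * p := by nlinarith
    have hsq : s ^ 2 * (23 / 8 + 3 * s / 4 - 9 * s ^ 2 / 8) ≤ 4 * s ^ 2 := by
      nlinarith [sq_nonneg s, mul_nonneg hs0 (sq_nonneg s)]
    have hpos : 0 ≤ s ^ 2 * (23 / 8 + 3 * s / 4 - 9 * s ^ 2 / 8) := by
      have : 0 ≤ 23 / 8 + 3 * s / 4 - 9 * s ^ 2 / 8 := by nlinarith
      positivity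
    rw [← hdiff] at hsq hpos
    rw [abs_of_nonneg (nonneg_of_mul_nonneg_left hpos (by linarith))]
    nlinarith
  have heq : √(2 + s) / (1 + s) - √2 * (1 - 3 * s / 4) = (√(2 + s) - √2 * p) / (1 + s) := by
    rw [← hp]; field_simp; ring
  rw [heq, abs_div, abs_of_pos (by linarith : (0 : ℝ) < 1 + s)]
  exact (div_le_self (abs_nonneg _) (by linarith)).trans hnum

noncomputable def airyPhaseRemainder (t : ℝ) : ℝ :=
  3 / 2 * airyPhase t - √2 * t ^ 3 + 9 * √2 / 20 * t ^ 5

theorem hasDerivAt_airyPhaseRemainder (t : ℝ) :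
    HasDerivAt airyPhaseRemainder
      (3 * t ^ 2 * (√(2 + t ^ 2) / (1 + t ^ 2) - √2 * (1 - 3 * t ^ 2 / 4))) t := by
  refine ((((hasDerivAt_airyPhase t).const_mul _).sub ((hasDerivAt_pow 3 t).const_mul _)).add
    ((hasDerivAt_pow 5 t).const_mul _)).congr_deriv ?_
  field_simp
  ring

theorem abs_airyPhaseRemainder_le {t : ℝ} (ht : t ∈ Icc (0 : ℝ) (1 / 2)) :
    |airyPhaseRemainder t| ≤ t ^ 7 := by
  have hR0 : airyPhaseRemainder 0 = 0 := by simp [airyPhaseRemainder, airyPhase]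
  refine image_norm_le_of_norm_deriv_right_le_deriv_boundary
    (fun t _ => (hasDerivAt_airyPhaseRemainder t).continuousAt.continuousWithinAt)
    (fun t _ => (hasDerivAt_airyPhaseRemainder t).hasDerivWithinAt)
    (by simp [hR0]) (fun t => hasDerivAt_pow 7 t) ?_ ht
  intro x ⟨hx0, hx⟩
  have hkey := abs_sqrt_two_add_div_one_add_sub_le (sq_nonneg x) (by nlinarith)
  rw [Real.norm_eq_abs, abs_mul, abs_of_nonneg (by positivity : 0 ≤ 3 * x ^ 2)]
  calc 3 * x ^ 2 * _ ≤ 3 * x ^ 2 * (2 * (x ^ 2) ^ 2) := by gcongr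
    _ ≤ (7 : ℕ) * x ^ 6 := by push_cast; nlinarith [pow_nonneg hx0 6]

theorem zeta_expansion_above_general (ζ : ℝ → ℝ)
    (hdef : ∀ z : ℝ, 1 < z →
      (2/3) * (-ζ z) ^ ((3:ℝ)/2) = Real.sqrt (z^2 - 1) - Real.arccos (1/z)) :
    ∃ C > 0, ∃ δ > 0, ∀ z, 1 < z → z < 1 + δ →
      |(-ζ z) ^ ((3:ℝ)/2) - Real.sqrt 2 * (z - 1) ^ ((3:ℝ)/2)
        + (9 * Real.sqrt 2 / 20) * (z - 1) ^ ((5:ℝ)/2)| ≤ C * (z - 1) ^ ((7:ℝ)/2) := by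
  refine ⟨1, one_pos, 1 / 4, by norm_num, fun z hz hzδ => ?_⟩
  have hpow (k : ℕ) : (z - 1) ^ ((k : ℝ) / 2) = √(z - 1) ^ k := by
    rw [rpow_div_two_eq_sqrt _ (by linarith), rpow_natCast]
  have hζ : (-ζ z) ^ ((3 : ℝ) / 2) = 3 / 2 * airyPhase √(z - 1) := by
    rw [← sqrt_sq_sub_one_sub_arccos_eq_airyPhase hz.le, ← hdef z hz]; ring
  have ht : √(z - 1) ∈ Icc (0 : ℝ) (1 / 2) :=
    ⟨sqrt_nonneg _, sqrt_le_iff.mpr ⟨by norm_num, by linarith⟩⟩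
  have h3 := hpow 3
  have h5 := hpow 5
  have h7 := hpow 7
  simp only [Nat.cast_ofNat] at h3 h5 h7
  rw [hζ, h3, h5, h7, one_mul]
  exact abs_airyPhaseRemainder_le ht

theorem zeta_expansion_above (ζ : ℝ → ℝ)
    (hneg : ∀ z : ℝ, 1 < z → 0 < -ζ z)
    (hdef : ∀ z : ℝ, 1 < z →
      (2/3) * (-ζ z) ^ ((3:ℝ)/2) = Real.sqrt (z^2 - 1) - Real.arccos (1/z)) :
    ∃ C > 0, ∃ δ > 0, ∀ z, 1 < z → z < 1 + δ →
      |(-ζ z) ^ ((3:ℝ)/2) - Real.sqrt 2 * (z - 1) ^ ((3:ℝ)/2)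
        + (9 * Real.sqrt 2 / 20) * (z - 1) ^ ((5:ℝ)/2)| ≤ C * (z - 1) ^ ((7:ℝ)/2) :=
  zeta_expansion_above_general ζ hdef
end

section
/- For fixed d ≥ 3 and a > 0, the sum ∑_{0 ≤ l < aμ - (d-2)/2} (m_l^d - m_{l-1}^d)·(aμ - l - (d-3)/2) equals 2(aμ)^{d-1}/(d-1)! + O(μ^{d-2}) as μ → ∞. -/
def mult (d : ℕ) (n : ℤ) : ℤ :=
  if n < 0 then 0
  else if n = 0 then 1
  else if n = 1 then (d : ℤ)
  else ((n + d - 1).toNat.choose (d - 1) : ℤ) - ((n + d - 3).toNat.choose (d - 1) : ℤ)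

open Finset

private def fch (d : ℕ) (n : ℤ) : ℤ := ((n + d - 1).toNat.choose (d - 1) : ℤ)

private lemma fch_neg (d : ℕ) (hd : 3 ≤ d) (n : ℤ) (h1 : -3 ≤ n) (h2 : n ≤ -1) :
    fch d n = 0 := by
  unfold fch
  rw [Nat.choose_eq_zero_of_lt (by omega)]
  simp

private lemma mult_eq_f (d : ℕ) (hd : 3 ≤ d) (n : ℤ) (hn : -1 ≤ n) :
    mult d n = fch d n - fch d (n - 2) := by
  unfold mult
  rcases lt_trichotomy n 0 with h | h | h
  · have hn1 : n = -1 := by omega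
    subst hn1
    rw [if_pos (by norm_num), fch_neg d hd (-1) (by norm_num) (by norm_num),
      fch_neg d hd (-1-2) (by norm_num) (by norm_num)]
    ring
  · subst h
    rw [if_neg (by norm_num), if_pos rfl, fch_neg d hd ((0:ℤ)-2) (by norm_num) (by norm_num)]
    unfold fch
    have h0 : ((0:ℤ) + d - 1).toNat = d - 1 := by omega
    rw [h0, Nat.choose_self]
    ring
  · rcases eq_or_lt_of_le (by omega : (1:ℤ) ≤ n) with h1 | h1
    · subst h1
      rw [if_neg (by norm_num), if_neg (by norm_num), if_pos rfl,
        fch_neg d hd ((1:ℤ)-2) (by norm_num) (by norm_num)]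
      unfold fch
      have h0 : ((1:ℤ) + d - 1).toNat = d := by omega
      rw [h0]
      have h2 : d.choose (d-1) = d := by
        have := Nat.choose_symm (Nat.sub_le d 1)
        rw [show d - (d-1) = 1 by omega, Nat.choose_one_right] at this
        omega
      rw [h2]; ring
    · rw [if_neg (by omega), if_neg (by omega), if_neg (by omega)]
      unfold fch
      have h0 : n - 2 + (d:ℤ) - 1 = n + d - 3 := by ring
      rw [h0]

private lemma sum_closed (d : ℕ) (hd : 3 ≤ d) (b : ℝ) (K : ℕ) :
    ∑ l ∈ range K, ((mult d (l:ℤ) - mult d ((l:ℤ) - 1) : ℤ) : ℝ) * (b - (l:ℝ))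
      = ((fch d ((K:ℤ) - 1) - fch d ((K:ℤ) - 3) : ℤ) : ℝ) * (b - K + 1)
        + ((fch d ((K:ℤ) - 2) + fch d ((K:ℤ) - 3) : ℤ) : ℝ) := by
  induction K with
  | zero =>
    simp only [range_zero, sum_empty, Nat.cast_zero]
    rw [show ((0:ℤ) - 1) = -1 by ring, show ((0:ℤ) - 3) = -3 by ring,
      show ((0:ℤ) - 2) = -2 by ring, fch_neg d hd (-1) (by norm_num) (by norm_num),
      fch_neg d hd (-2) (by norm_num) (by norm_num), fch_neg d hd (-3) (by norm_num) (by norm_num)]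
    norm_num
  | succ K ih =>
    rw [sum_range_succ, ih]
    rw [mult_eq_f d hd (K:ℤ) (by omega), mult_eq_f d hd ((K:ℤ) - 1) (by omega)]
    have e1 : ((K + 1 : ℕ) : ℤ) - 1 = (K:ℤ) := by push_cast; ring
    have e2 : ((K + 1 : ℕ) : ℤ) - 2 = (K:ℤ) - 1 := by push_cast; ring
    have e3 : ((K + 1 : ℕ) : ℤ) - 3 = (K:ℤ) - 2 := by push_cast; ring
    have e4 : (K:ℤ) - 1 - 2 = (K:ℤ) - 3 := by ring
    rw [e1, e2, e3, e4]
    push_cast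
    ring

private lemma fch_eq_choose (d : ℕ) (hd : 3 ≤ d) (K : ℕ) (hK : 3 ≤ K) (c : ℕ) (hc : c ≤ 3) :
    fch d ((K:ℤ) - c) = ((K + d - 1 - c).choose (d - 1) : ℤ) := by
  unfold fch
  congr 2
  omega

private lemma cast_choose_prod (k n : ℕ) (h : k ≤ n) :
    (k.factorial : ℝ) * (n.choose k : ℝ) = ∏ i ∈ range k, ((n : ℝ) - (i : ℝ)) := by
  have h1 : k.factorial * n.choose k = n.descFactorial k :=
    (Nat.descFactorial_eq_factorial_mul_choose n k).symm
  calc (k.factorial : ℝ) * (n.choose k : ℝ) = ((k.factorial * n.choose k : ℕ) : ℝ) := by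
        push_cast; ring
    _ = ((n.descFactorial k : ℕ) : ℝ) := by rw [h1]
    _ = ∏ i ∈ range k, ((n : ℝ) - (i : ℝ)) := by
        rw [Nat.descFactorial_eq_prod_range, Nat.cast_prod]
        refine Finset.prod_congr rfl fun i hi => ?_
        rw [Nat.cast_sub (by have := mem_range.1 hi; omega)]

private lemma prod_bounds (m : ℕ) (t e : ℝ) (he : 0 ≤ e) (het : e ≤ t) (g : ℕ → ℝ)
    (hg : ∀ i ∈ range m, |g i - t| ≤ e) :
    (t - e) ^ m ≤ ∏ i ∈ range m, g i ∧ (∏ i ∈ range m, g i) ≤ (t + e) ^ m := by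
  constructor
  · calc (t - e) ^ m = ∏ _i ∈ range m, (t - e) := by rw [prod_const, card_range]
      _ ≤ ∏ i ∈ range m, g i :=
        Finset.prod_le_prod (fun i _ => by linarith)
          (fun i hi => by have := abs_le.1 (hg i hi); linarith [this.1])
  · calc (∏ i ∈ range m, g i) ≤ ∏ _i ∈ range m, (t + e) :=
        Finset.prod_le_prod
          (fun i hi => by have := abs_le.1 (hg i hi); linarith [this.1])
          (fun i hi => by have := abs_le.1 (hg i hi); linarith [this.2])
      _ = (t + e) ^ m := by rw [prod_const, card_range]

private lemma pow_sub_pow_le' (x y : ℝ) (hy : 0 ≤ y) (hxy : y ≤ x) :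
    ∀ m : ℕ, x ^ (m + 1) - y ^ (m + 1) ≤ (m + 1 : ℝ) * (x - y) * x ^ m := by
  intro m
  induction m with
  | zero => norm_num
  | succ m ih =>
    have hx : (0:ℝ) ≤ x := hy.trans hxy
    have h1 : y ^ (m + 1) ≤ x ^ (m + 1) := pow_le_pow_left₀ hy hxy _
    have h2 : (0:ℝ) ≤ x ^ (m + 1) := pow_nonneg hx _
    have h3 : x ^ (m + 2) = x * x ^ (m + 1) := by ring
    have h4 : y ^ (m + 2) = y * y ^ (m + 1) := by ring
    have h5 := mul_le_mul_of_nonneg_left ih hx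
    have h7 := mul_le_mul_of_nonneg_left h1 (sub_nonneg.2 hxy)
    have key : x ^ (m+1+1) - y ^ (m+1+1) = x*(x^(m+1)-y^(m+1)) + (x-y)*y^(m+1) := by ring
    have h9 : ((m:ℝ)+1+1)*(x-y)*x^(m+1) = x*(((m:ℝ)+1)*(x-y)*x^m) + (x-y)*x^(m+1) := by
      ring
    push_cast
    nlinarith [h5, h7, key, h9]

private lemma final_glue (F RA RB RC PA PB PC w T Δ bound : ℝ)
    (hF : 1 ≤ F) (hFA : F * RA = PA) (hFB : F * RB = PB) (hFC : F * RC = PC)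
    (hw : |w| ≤ 3/2)
    (hPA : |PA - T| ≤ Δ) (hPB : |PB - T| ≤ Δ) (hPC : |PC - T| ≤ Δ)
    (h5 : 5 * Δ ≤ bound) :
    |(RA - RC) * w + (RB + RC) - 2 * T / F| ≤ bound := by
  have hF0 : (0:ℝ) < F := lt_of_lt_of_le one_pos hF
  have hΔ0 : (0:ℝ) ≤ Δ := le_trans (abs_nonneg _) hPA
  have key : F * ((RA - RC) * w + (RB + RC) - 2 * T / F)
      = ((PA - T) - (PC - T)) * w + (PB - T) + (PC - T) := by
    have h2T : F * (2 * T / F) = 2 * T := by field_simp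
    calc F * ((RA - RC) * w + (RB + RC) - 2 * T / F)
        = (F * RA - F * RC) * w + (F * RB + F * RC) - F * (2 * T / F) := by ring
      _ = ((PA - T) - (PC - T)) * w + (PB - T) + (PC - T) := by
          rw [hFA, hFB, hFC, h2T]; ring
  have hdiff : |(PA - T) - (PC - T)| ≤ 2 * Δ :=
    le_trans (abs_sub _ _) (by linarith)
  have hmul : |((PA - T) - (PC - T)) * w| ≤ (2 * Δ) * (3/2) := by
    rw [abs_mul]
    exact mul_le_mul hdiff hw (abs_nonneg _) (by linarith)
  have h2 : |((PA - T) - (PC - T)) * w + (PB - T) + (PC - T)| ≤ 5 * Δ := by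
    have t1 := abs_add_le (((PA - T) - (PC - T)) * w + (PB - T)) (PC - T)
    have t2 := abs_add_le (((PA - T) - (PC - T)) * w) (PB - T)
    linarith
  calc |(RA - RC) * w + (RB + RC) - 2 * T / F|
      ≤ F * |(RA - RC) * w + (RB + RC) - 2 * T / F| :=
        le_mul_of_one_le_left (abs_nonneg _) hF
    _ = |F * ((RA - RC) * w + (RB + RC) - 2 * T / F)| := by
        rw [abs_mul, abs_of_pos hF0]
    _ ≤ 5 * Δ := by rw [key]; exact h2
    _ ≤ bound := h5

set_option maxHeartbeats 1000000 in
theorem weighted_sum_asymptotic (d : ℕ) (hd : 3 ≤ d) (a : ℝ) (ha : 0 < a) :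
    ∃ C > (0:ℝ), ∃ μ₀ : ℝ, ∀ μ : ℝ, μ₀ ≤ μ →
      |(∑ l ∈ (Finset.range (Nat.ceil (a * μ) + 1)).filter
            (fun l : ℕ => (l : ℝ) < a * μ - ((d : ℝ) - 2) / 2),
          ((mult d (l : ℤ) - mult d ((l : ℤ) - 1) : ℤ) : ℝ)
            * (a * μ - (l : ℝ) - ((d : ℝ) - 3) / 2))
        - 2 * (a * μ) ^ (d - 1) / ((d - 1).factorial : ℝ)|
      ≤ C * μ ^ (d - 2) := by
  have hdR : (3:ℝ) ≤ (d:ℝ) := by exact_mod_cast hd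
  refine ⟨32 * (d:ℝ)^2 * 2^d * (a^(d-2) + 1) + 1, by positivity, (4*(d:ℝ)+10)/a,
    fun μ hμ => ?_⟩
  have ht : 4*(d:ℝ)+10 ≤ a*μ := by
    rw [div_le_iff₀ ha] at hμ
    linarith [hμ, mul_comm μ a]
  have hμpos : (0:ℝ) < μ := by nlinarith
  set cd := (d:ℝ) with hcd
  set t := a*μ with hTdef
  have hxpos : (0:ℝ) < t - (cd-2)/2 := by linarith
  set x := t - (cd-2)/2 with hxdef
  set K := Nat.ceil x with hKdef
  have hKx : x ≤ (K:ℝ) := Nat.le_ceil x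
  have hKx2 : (K:ℝ) < x + 1 := Nat.ceil_lt_add_one hxpos.le
  clear_value K x t cd
  have hK3 : 3 ≤ K := by
    have h3 : (3:ℝ) ≤ (K:ℝ) := le_trans (by linarith) hKx
    exact_mod_cast h3
  -- the filtered set is range K
  have hset : (Finset.range (Nat.ceil t + 1)).filter (fun l : ℕ => (l:ℝ) < x)
      = range K := by
    rw [hKdef]
    ext l
    simp only [mem_filter, mem_range]
    constructor
    · rintro ⟨_, h2⟩
      exact Nat.lt_ceil.2 h2
    · intro h2
      have h2' : (l:ℝ) < x := Nat.lt_ceil.1 h2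
      have hlK : l < K := hKdef ▸ h2
      have h3 : (l:ℝ) < t := by linarith
      have h4 : l < Nat.ceil t := Nat.lt_ceil.2 h3
      exact ⟨by omega, h2'⟩
  rw [hset]
  -- closed form of the sum
  have hS : ∑ l ∈ range K, ((mult d (l:ℤ) - mult d ((l:ℤ) - 1) : ℤ) : ℝ)
        * (t - (l:ℝ) - (cd-3)/2)
      = ((fch d ((K:ℤ) - 1) - fch d ((K:ℤ) - 3) : ℤ) : ℝ) * ((t - (cd-3)/2) - K + 1)
        + ((fch d ((K:ℤ) - 2) + fch d ((K:ℤ) - 3) : ℤ) : ℝ) := by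
    rw [← sum_closed d hd (t - (cd-3)/2) K]
    exact Finset.sum_congr rfl fun l _ => by ring
  rw [hS]
  -- fch to choose
  have hA : fch d ((K:ℤ) - 1) = (((K + d - 2).choose (d-1) : ℕ) : ℤ) := by
    unfold fch; congr 2; omega
  have hB : fch d ((K:ℤ) - 2) = (((K + d - 3).choose (d-1) : ℕ) : ℤ) := by
    unfold fch; congr 2; omega
  have hC : fch d ((K:ℤ) - 3) = (((K + d - 4).choose (d-1) : ℕ) : ℤ) := by
    unfold fch; congr 2; omega
  rw [hA, hB, hC]
  push_cast
  -- factorial facts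
  have hF1 : (1:ℝ) ≤ ((d-1).factorial : ℝ) := by
    exact_mod_cast Nat.one_le_iff_ne_zero.2 (d-1).factorial_ne_zero
  -- choose-to-product facts
  have hFA : ((d-1).factorial : ℝ) * ((K + d - 2).choose (d-1) : ℝ)
      = ∏ i ∈ range (d-1), ((((K + d - 2 : ℕ)):ℝ) - (i:ℝ)) :=
    cast_choose_prod (d-1) (K + d - 2) (by omega)
  have hFB : ((d-1).factorial : ℝ) * ((K + d - 3).choose (d-1) : ℝ)
      = ∏ i ∈ range (d-1), ((((K + d - 3 : ℕ)):ℝ) - (i:ℝ)) :=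
    cast_choose_prod (d-1) (K + d - 3) (by omega)
  have hFC : ((d-1).factorial : ℝ) * ((K + d - 4).choose (d-1) : ℝ)
      = ∏ i ∈ range (d-1), ((((K + d - 4 : ℕ)):ℝ) - (i:ℝ)) :=
    cast_choose_prod (d-1) (K + d - 4) (by omega)
  -- bound each factor
  have hbound : ∀ n : ℕ, K + d - 4 ≤ n → n ≤ K + d - 2 →
      ∀ i ∈ range (d-1), |(n:ℝ) - (i:ℝ) - t| ≤ 2*cd := by
    intro n h1 h2 i hi
    have hi' := mem_range.1 hi
    have hiR : (i:ℝ) ≤ cd - 2 := by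
      have h3 : (i:ℝ) ≤ ((d - 2 : ℕ):ℝ) := by exact_mod_cast (by omega : i ≤ d - 2)
      rw [Nat.cast_sub (by omega)] at h3
      push_cast at h3
      linarith
    have hnlo : (K:ℝ) + cd - 4 ≤ (n:ℝ) := by
      have h4 : ((K + d - 4 : ℕ):ℝ) ≤ (n:ℝ) := Nat.cast_le.2 h1
      rw [Nat.cast_sub (by omega)] at h4
      push_cast at h4
      linarith
    have hnhi : (n:ℝ) ≤ (K:ℝ) + cd - 2 := by
      have h4 : ((n:ℕ):ℝ) ≤ ((K + d - 2 : ℕ):ℝ) := Nat.cast_le.2 h2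
      rw [Nat.cast_sub (by omega)] at h4
      push_cast at h4
      linarith
    have hi0 : (0:ℝ) ≤ (i:ℝ) := Nat.cast_nonneg i
    rw [abs_le]
    constructor <;> linarith
  have het : 2*cd ≤ t := by linarith
  have he0 : (0:ℝ) ≤ 2*cd := by linarith
  have pb1 := prod_bounds (d-1) t (2*cd) he0 het _ (hbound (K+d-2) (by omega) (by omega))
  have pb2 := prod_bounds (d-1) t (2*cd) he0 het _ (hbound (K+d-3) (by omega) (by omega))
  have pb3 := prod_bounds (d-1) t (2*cd) he0 het _ (hbound (K+d-4) (by omega) (by omega))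
  have hTlo : (t - 2*cd)^(d-1) ≤ t^(d-1) := pow_le_pow_left₀ (by linarith) (by linarith) _
  have hThi : t^(d-1) ≤ (t + 2*cd)^(d-1) := pow_le_pow_left₀ (by linarith) (by linarith) _
  set Δ := (t + 2*cd)^(d-1) - (t - 2*cd)^(d-1) with hΔdef
  clear_value Δ
  have hPA : |(∏ i ∈ range (d-1), ((((K + d - 2 : ℕ)):ℝ) - (i:ℝ))) - t^(d-1)| ≤ Δ := by
    rw [abs_le]; constructor <;> [linarith [pb1.1]; linarith [pb1.2]]
  have hPB : |(∏ i ∈ range (d-1), ((((K + d - 3 : ℕ)):ℝ) - (i:ℝ))) - t^(d-1)| ≤ Δ := by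
    rw [abs_le]; constructor <;> [linarith [pb2.1]; linarith [pb2.2]]
  have hPC : |(∏ i ∈ range (d-1), ((((K + d - 4 : ℕ)):ℝ) - (i:ℝ))) - t^(d-1)| ≤ Δ := by
    rw [abs_le]; constructor <;> [linarith [pb3.1]; linarith [pb3.2]]
  have hw : |(t - (cd-3)/2) - (K:ℝ) + 1| ≤ 3/2 := by
    rw [abs_le]; constructor <;> linarith
  -- bound Δ
  have hc2 : ((d-2:ℕ):ℝ) = cd - 2 := by
    rw [hcd, Nat.cast_sub (by omega)]; norm_num
  have hΔ' : Δ ≤ (cd-1) * (4*cd) * (t + 2*cd)^(d-2) := by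
    have hraw := pow_sub_pow_le' (t + 2*cd) (t - 2*cd) (by linarith) (by linarith) (d-2)
    rw [show d - 2 + 1 = d - 1 by omega] at hraw
    have heq : (((d-2:ℕ):ℝ) + 1) * ((t + 2*cd) - (t - 2*cd)) * (t + 2*cd)^(d-2)
        = (cd-1) * (4*cd) * (t + 2*cd)^(d-2) := by rw [hc2]; ring
    rw [hΔdef]
    calc (t + 2*cd)^(d-1) - (t - 2*cd)^(d-1)
        ≤ (((d-2:ℕ):ℝ) + 1) * ((t + 2*cd) - (t - 2*cd)) * (t + 2*cd)^(d-2) := hraw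
      _ = (cd-1) * (4*cd) * (t + 2*cd)^(d-2) := heq
  have hμp : (0:ℝ) ≤ μ^(d-2) := by positivity
  have h5 : 5 * Δ ≤ (32 * cd^2 * 2^d * (a^(d-2) + 1) + 1) * μ^(d-2) := by
    have hpow : (t + 2*cd)^(d-2) ≤ 2^(d-2) * (a^(d-2) * μ^(d-2)) := by
      calc (t + 2*cd)^(d-2) ≤ (2*t)^(d-2) :=
            pow_le_pow_left₀ (by linarith) (by linarith) _
        _ = 2^(d-2) * (a^(d-2) * μ^(d-2)) := by rw [mul_pow, hTdef, mul_pow]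
    have step1 : Δ ≤ (cd-1) * (4*cd) * (2^(d-2) * (a^(d-2) * μ^(d-2))) := by
      calc Δ ≤ (cd-1) * (4*cd) * (t + 2*cd)^(d-2) := hΔ'
        _ ≤ (cd-1) * (4*cd) * (2^(d-2) * (a^(d-2) * μ^(d-2))) := by
            exact mul_le_mul_of_nonneg_left hpow (mul_nonneg (by linarith) (by linarith))
    have h2d : (2:ℝ)^(d-2) ≤ 2^d := pow_le_pow_right₀ (by norm_num) (by omega)
    have ha2 : (0:ℝ) ≤ a^(d-2) := by positivity
    calc 5 * Δ ≤ 5 * ((cd-1) * (4*cd) * (2^(d-2) * (a^(d-2) * μ^(d-2)))) := by linarith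
      _ = (20*(cd-1)*cd) * 2^(d-2) * a^(d-2) * μ^(d-2) := by ring
      _ ≤ (32*cd^2) * 2^d * (a^(d-2)+1) * μ^(d-2) := by
          have g1 : 20*(cd-1)*cd ≤ 32*cd^2 := by nlinarith
          have g2 : (0:ℝ) ≤ 20*(cd-1)*cd := by nlinarith
          have g3 : (0:ℝ) ≤ (2:ℝ)^(d-2) := by positivity
          have g4 : a^(d-2) ≤ a^(d-2)+1 := by linarith
          have m1 : 20*(cd-1)*cd * 2^(d-2) ≤ 32*cd^2 * 2^d :=
            mul_le_mul g1 h2d g3 (by nlinarith)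
          have m2 : 20*(cd-1)*cd * 2^(d-2) * a^(d-2) ≤ 32*cd^2 * 2^d * (a^(d-2)+1) :=
            mul_le_mul m1 g4 ha2 (by positivity)
          exact mul_le_mul_of_nonneg_right m2 hμp
      _ ≤ (32 * cd^2 * 2^d * (a^(d-2) + 1) + 1) * μ^(d-2) := by
          apply mul_le_mul_of_nonneg_right _ hμp
          nlinarith [pow_pos (show (0:ℝ) < 2 by norm_num) d]
  exact final_glue _ _ _ _ _ _ _ _ _ _ _ hF1 hFA hFB hFC hw hPA hPB hPC h5
end

section
/- Let 0 < r < R. Define G : [0,R] → ℝ by G(x) = R·g(x/R) - r·g(x/r) for 0 ≤ x ≤ r and G(x) = R·g(x/R) for r ≤ x ≤ R, where g(t) = (√(1-t²) - t·arccos(t))/π. Then G is continuous on [0,R], strictly decreasing, with G(0) = (R-r)/π and G(R) = 0. -/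
noncomputable def g (t : ℝ) : ℝ := (Real.sqrt (1 - t^2) - t * Real.arccos t) / Real.pi

noncomputable def G (r R x : ℝ) : ℝ :=
  if x ≤ r then R * g (x / R) - r * g (x / r) else R * g (x / R)

/-! `g' = -arccos / π` on `(-1, 1)`, so `x ↦ c * g (x / c)` has derivative `-arccos (x / c) / π`.
On `[0, r]` the derivative of `G` is `(arccos (x / r) - arccos (x / R)) / π < 0` because `arccos`
is decreasing and `x / R < x / r`; on `[r, R]` it is `-arccos (x / R) / π < 0`. The two pieces
agree at `r` since `g 1 = 0`. -/

open Real Set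

@[fun_prop]
lemma continuous_g : Continuous g := by
  unfold g
  fun_prop

lemma g_zero : g 0 = 1 / π := by
  simp [g]

lemma g_one : g 1 = 0 := by
  simp [g]

lemma hasDerivAt_g {t : ℝ} (ht : t ∈ Ioo (-1) 1) : HasDerivAt g (-arccos t / π) t := by
  obtain ⟨h₁, h₂⟩ := ht
  have hpos : 0 < 1 - t ^ 2 := by nlinarith
  have hsqrt : HasDerivAt (fun t : ℝ => √(1 - t ^ 2)) (1 / (2 * √(1 - t ^ 2)) * -(2 * t)) t :=
    (hasDerivAt_sqrt hpos.ne').comp t (by simpa using (hasDerivAt_pow 2 t).const_sub 1)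
  have harccos : HasDerivAt (fun t : ℝ => t * arccos t)
      (1 * arccos t + t * -(1 / √(1 - t ^ 2))) t :=
    (hasDerivAt_id t).mul (hasDerivAt_arccos h₁.ne' h₂.ne)
  refine ((hsqrt.sub harccos).div_const π).congr_deriv ?_
  have : √(1 - t ^ 2) ≠ 0 := (sqrt_pos.mpr hpos).ne'
  field_simp
  ring

lemma hasDerivAt_mul_g_div {c x : ℝ} (hc : 0 < c) (hx : x ∈ Ioo (-c) c) :
    HasDerivAt (fun x => c * g (x / c)) (-arccos (x / c) / π) x := by
  have hxc : x / c ∈ Ioo (-1) 1 := by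
    rw [mem_Ioo, lt_div_iff₀ hc, div_lt_one hc]
    exact ⟨by linarith [hx.1], hx.2⟩
  refine (((hasDerivAt_g hxc).comp x ((hasDerivAt_id x).div_const c)).const_mul c).congr_deriv ?_
  field_simp

lemma strictAntiOn_mul_g_div {c : ℝ} (hc : 0 < c) :
    StrictAntiOn (fun x => c * g (x / c)) (Icc (-c) c) := by
  refine strictAntiOn_of_deriv_neg (convex_Icc _ _) (by fun_prop) fun x hx => ?_
  rw [interior_Icc] at hx
  have harccos : 0 < arccos (x / c) := arccos_pos.mpr ((div_lt_one hc).mpr hx.2)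
  rw [(hasDerivAt_mul_g_div hc hx).deriv, neg_div, neg_neg_iff_pos]
  positivity

lemma strictAntiOn_mul_g_div_sub {r R : ℝ} (hr : 0 < r) (hrR : r < R) :
    StrictAntiOn (fun x => R * g (x / R) - r * g (x / r)) (Icc 0 r) := by
  have hR : 0 < R := hr.trans hrR
  refine strictAntiOn_of_deriv_neg (convex_Icc _ _) (by fun_prop) fun x hx => ?_
  rw [interior_Icc] at hx
  obtain ⟨hx₀, hxr⟩ := hx
  have hderiv := (hasDerivAt_mul_g_div hR ⟨by linarith, hxr.trans hrR⟩).fun_sub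
    (hasDerivAt_mul_g_div hr ⟨by linarith, hxr⟩)
  have harccos : arccos (x / r) < arccos (x / R) := by
    have hmem : ∀ c, 0 < c → x ≤ c → x / c ∈ Icc (-1) 1 := fun c hc hxc =>
      ⟨by rw [le_div_iff₀ hc]; linarith, (div_le_one hc).mpr hxc⟩
    exact strictAntiOn_arccos (hmem R hR (by linarith)) (hmem r hr hxr.le)
      (div_lt_div_of_pos_left hx₀ hr hrR)
  rw [hderiv.deriv, ← sub_div, div_neg_iff]
  exact Or.inr ⟨by linarith, pi_pos⟩

lemma G_of_le {r R x : ℝ} (hx : x ≤ r) : G r R x = R * g (x / R) - r * g (x / r) :=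
  if_pos hx

lemma G_of_ge {r R x : ℝ} (hr : r ≠ 0) (hx : r ≤ x) : G r R x = R * g (x / R) := by
  rcases hx.eq_or_lt with rfl | hx
  · simp [G, div_self hr, g_one]
  · exact if_neg hx.not_ge

lemma continuous_G {r : ℝ} (hr : r ≠ 0) (R : ℝ) : Continuous (G r R) :=
  Continuous.if_le (by fun_prop) (by fun_prop) continuous_id continuous_const
    fun x hx => by simp [show x = r from hx, div_self hr, g_one]

theorem G_properties (r R : ℝ) (hr : 0 < r) (hrR : r < R) :
    ContinuousOn (G r R) (Set.Icc 0 R) ∧ StrictAntiOn (G r R) (Set.Icc 0 R) ∧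
    G r R 0 = (R - r) / Real.pi ∧ G r R R = 0 := by
  have hR : 0 < R := hr.trans hrR
  have hleft : StrictAntiOn (G r R) (Icc 0 r) :=
    (strictAntiOn_mul_g_div_sub hr hrR).congr fun x hx => (G_of_le hx.2).symm
  have hright : StrictAntiOn (G r R) (Icc r R) :=
    ((strictAntiOn_mul_g_div hR).mono (Icc_subset_Icc (by linarith) le_rfl)).congr
      fun x hx => (G_of_ge hr.ne' hx.1).symm
  refine ⟨(continuous_G hr.ne' R).continuousOn, ?_, ?_, ?_⟩
  · rw [← Icc_union_Icc_eq_Icc hr.le hrR.le]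
    exact hleft.union hright (isGreatest_Icc hr.le) (isLeast_Icc hrR.le)
  · rw [G_of_le hr.le]
    simp only [zero_div, g_zero]
    ring
  · rw [G_of_ge hr.ne' hrR.le, div_self hR.ne', g_one, mul_zero]
end
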